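/- Under the hypotheses of the previous bound and additionally assuming liminf (f(n)+g(n))/ln(n) = 0 along an anchor sequence {n_k}, for every ε > 0 there exists K such that for all k > K and 1 ≤ i ≤ n_k, Z(X,T,φ,i,δ) ≤ e^{i·P(X,T,φ)} · n_k^ε. -/

import Mathlib

open Filter Topology MeasureTheory

/-- `z` `η`-shadows the points `x 0, …, x (k-1)` for `n i` iterates with gaps `m i`. -/
def Shadows {X : Type*} [MetricSpace X] (T : X → X) (η : ℝ) (k : ℕ)
    (x : ℕ → X) (n m : ℕ → ℕ) (z : X) : Prop :=
  ∀ i < k, ∀ l < n i,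
    dist (T^[l + ∑ j ∈ Finset.range i, (n j + m j)] z) (T^[l] (x i)) < η

/-- Non-uniform specification with gap bounds `f` at scale `η`. -/
def NonUnifSpec {X : Type*} [MetricSpace X] (T : X → X) (f : ℕ → ℕ) (η : ℝ) : Prop :=
  ∀ (k : ℕ) (x : ℕ → X) (n m : ℕ → ℕ),
    (∀ i, i + 1 < k → max (f (n i)) (f (n (i + 1))) ≤ m i) →
    ∃ z, Shadows T η k x n m z

/-- Expansivity with constant `δ`: some `ℤ`-iterate separates any two distinct points by more than `δ`. -/
def Expansive {X : Type*} [MetricSpace X] [CompactSpace X] (T : X ≃ₜ X) (δ : ℝ) : Prop :=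
  ∀ x y : X, x ≠ y → ∃ n : ℤ,
    δ < dist (((T.toEquiv : Equiv.Perm X) ^ n) x) (((T.toEquiv : Equiv.Perm X) ^ n) y)

/-- Birkhoff partial sums `S_n φ`. -/
def birkhoff {X : Type*} (T : X → X) (φ : X → ℝ) (n : ℕ) (x : X) : ℝ :=
  ∑ i ∈ Finset.range n, φ (T^[i] x)

/-- `g` is a bound for the partial sum variations of `φ` at scale `η`:
`g n ≥ V(X,T,φ,i,η)` whenever `i ≤ n`. -/
def HasVarBounds {X : Type*} [MetricSpace X] (T : X → X) (φ : X → ℝ) (g : ℕ → ℝ) (η : ℝ) : Prop :=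
  ∀ n, ∀ i ≤ n, ∀ x y : X, (∀ j < i, dist (T^[j] x) (T^[j] y) < η) →
    |birkhoff T φ i x - birkhoff T φ i y| ≤ g n

/-- `S` is `(n, ε)`-separated. -/
def IsSep {X : Type*} [MetricSpace X] (T : X → X) (n : ℕ) (ε : ℝ) (S : Set X) : Prop :=
  ∀ x ∈ S, ∀ y ∈ S, x ≠ y → ∃ k < n, ε < dist (T^[k] x) (T^[k] y)

/-- The partition function `Z(X,T,φ,n,ε)`: the maximal value of `∑_{x ∈ S} e^{S_n φ(x)}`
over `(n,ε)`-separated sets `S`. -/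
noncomputable def partFn {X : Type*} [MetricSpace X] (T : X → X) (φ : X → ℝ) (n : ℕ) (ε : ℝ) : ℝ :=
  sSup {r | ∃ S : Finset X, IsSep T n ε ↑S ∧ r = ∑ x ∈ S, Real.exp (birkhoff T φ n x)}


/-!
Specification glues any `q` orbit segments of length `i` taken from an `(i, δ)`-separated set `S`,
with gaps of length `f i`, into a `(q (i + f i), δ/3)`-separated set, and on every block the
Birkhoff sum of the glued orbit loses at most `g i + f i ‖φ‖`. Expansivity recovers
`δ`-separation from `δ/3`-separation at the cost of a time shift bounded by a constant `N`. Hence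
`(∑_S e^{S_i φ})^q ≤ e^{q (g i + f i ‖φ‖ + (i + f i)(P + ε)) + O(1)}`; taking `q`-th roots as
`q → ∞` and then `ε → 0` gives `Z(i, δ) ≤ e^{i P + g i + f i (‖φ‖ + |P|)}`. Along the anchor
sequence this correction is `o(log n_k)`, uniformly in `i ≤ n_k` because `f` and `g` are monotone.
-/

open Finset Real

section Birkhoff

variable {X : Type*} (T : X → X) (φ : X → ℝ)

lemma birkhoff_add (a b : ℕ) (x : X) :
    birkhoff T φ (a + b) x = birkhoff T φ a x + birkhoff T φ b (T^[a] x) := by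
  rw [birkhoff, birkhoff, birkhoff, sum_range_add]
  simp only [add_comm a, Function.iterate_add_apply]

lemma birkhoff_mul (c q : ℕ) (x : X) :
    birkhoff T φ (q * c) x = ∑ a ∈ range q, birkhoff T φ c (T^[a * c] x) := by
  induction q with
  | zero => simp [birkhoff]
  | succ q ih => rw [Nat.succ_mul, birkhoff_add, ih, sum_range_succ]

lemma abs_birkhoff_le {C : ℝ} (hC : ∀ y, |φ y| ≤ C) (n : ℕ) (x : X) :
    |birkhoff T φ n x| ≤ n * C :=
  calc |birkhoff T φ n x| ≤ ∑ i ∈ range n, |φ (T^[i] x)| := abs_sum_le_sum_abs _ _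
    _ ≤ ∑ _i ∈ range n, C := sum_le_sum fun i _ => hC _
    _ = n * C := by simp

end Birkhoff

section PartFn

variable {X : Type*} [MetricSpace X]

lemma exists_card_le_pow_of_isSep [CompactSpace X] (T : X → X) {η : ℝ} (hη : 0 < η) :
    ∃ M : ℕ, ∀ n (S : Finset X), IsSep T n η S → #S ≤ M ^ n := by
  obtain ⟨t, -, ht⟩ := isCompact_univ.elim_nhds_subcover (fun x : X => Metric.ball x (η / 2))
    fun x _ => Metric.ball_mem_nhds x (half_pos hη)
  have hcover : ∀ z : X, ∃ c : t, z ∈ Metric.ball (c : X) (η / 2) := fun z => by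
    obtain ⟨c, hc, hz⟩ := Set.mem_iUnion₂.1 (ht (Set.mem_univ z))
    exact ⟨⟨c, hc⟩, hz⟩
  choose c hc using hcover
  refine ⟨#t, fun n S hS => ?_⟩
  -- an `(n, η)`-separated set is coded injectively by the itineraries through the `η/2`-balls
  have hinj : Set.InjOn (fun x (l : Fin n) => c (T^[l] x)) S := by
    intro x hx y hy hxy
    by_contra hne
    obtain ⟨k, hk, hsep⟩ := hS x hx y hy hne
    have hx' := hc (T^[k] x)
    have hy' := hc (T^[k] y)
    have hck : c (T^[k] x) = c (T^[k] y) := congrFun hxy ⟨k, hk⟩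
    rw [Metric.mem_ball, hck] at hx'
    rw [Metric.mem_ball] at hy'
    linarith [dist_triangle_right (T^[k] x) (T^[k] y) (c (T^[k] y))]
  simpa using card_le_card_of_injOn _ (fun x _ => mem_univ _) hinj

lemma bddAbove_partFn_set [CompactSpace X] (T : X → X) (φ : X → ℝ) {η : ℝ} (hη : 0 < η)
    {C : ℝ} (hC : ∀ y, |φ y| ≤ C) (n : ℕ) :
    BddAbove {r | ∃ S : Finset X, IsSep T n η S ∧ r = ∑ x ∈ S, exp (birkhoff T φ n x)} := by
  obtain ⟨M, hM⟩ := exists_card_le_pow_of_isSep T hη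
  refine ⟨M ^ n * exp (n * C), ?_⟩
  rintro r ⟨S, hS, rfl⟩
  calc ∑ x ∈ S, exp (birkhoff T φ n x) ≤ ∑ _x ∈ S, exp (n * C) :=
        sum_le_sum fun x _ => exp_le_exp.2 (abs_le.1 (abs_birkhoff_le T φ hC n x)).2
    _ = #S * exp (n * C) := by rw [sum_const, nsmul_eq_mul]
    _ ≤ M ^ n * exp (n * C) := by gcongr; exact_mod_cast hM n S hS

lemma sum_le_partFn [CompactSpace X] (T : X → X) (φ : X → ℝ) {η : ℝ} (hη : 0 < η)
    {C : ℝ} (hC : ∀ y, |φ y| ≤ C) (n : ℕ) {S : Finset X} (hS : IsSep T n η S) :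
    ∑ x ∈ S, exp (birkhoff T φ n x) ≤ partFn T φ n η :=
  le_csSup (bddAbove_partFn_set T φ hη hC n) ⟨S, hS, rfl⟩

lemma partFn_nonneg [CompactSpace X] (T : X → X) (φ : X → ℝ) {η : ℝ} (hη : 0 < η)
    {C : ℝ} (hC : ∀ y, |φ y| ≤ C) (n : ℕ) : 0 ≤ partFn T φ n η := by
  simpa using sum_le_partFn T φ hη hC n (S := ∅) (by simp [IsSep])

lemma partFn_le (T : X → X) (φ : X → ℝ) {η B : ℝ} (n : ℕ) (hB : 0 ≤ B)
    (h : ∀ S : Finset X, IsSep T n η S → ∑ x ∈ S, exp (birkhoff T φ n x) ≤ B) :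
    partFn T φ n η ≤ B := by
  refine Real.sSup_le ?_ hB
  rintro r ⟨S, hS, rfl⟩
  exact h S hS

end PartFn

namespace Homeomorph

variable {X : Type*} [TopologicalSpace X] (T : X ≃ₜ X)

lemma toPerm_zpow_natCast_apply (a : ℕ) (x : X) :
    ((T.toEquiv : Equiv.Perm X) ^ (a : ℤ)) x = T^[a] x := by
  rw [zpow_natCast, Equiv.Perm.coe_pow]
  rfl

lemma toPerm_zpow_neg_natCast_apply (a : ℕ) (x : X) :
    ((T.toEquiv : Equiv.Perm X) ^ (-(a : ℤ))) x = T.symm^[a] x := by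
  rw [zpow_neg, zpow_natCast, ← inv_pow, Equiv.Perm.coe_pow]
  rfl

lemma continuous_toPerm_zpow (m : ℤ) : Continuous ⇑((T.toEquiv : Equiv.Perm X) ^ m) := by
  obtain ⟨a, rfl | rfl⟩ := Int.eq_nat_or_neg m
  · simpa only [← funext (T.toPerm_zpow_natCast_apply a)] using T.continuous.iterate a
  · simpa only [← funext (T.toPerm_zpow_neg_natCast_apply a)] using T.symm.continuous.iterate a

lemma iterate_iterate_symm (a b : ℕ) (x : X) :
    T^[a] (T.symm^[b] x) = ((T.toEquiv : Equiv.Perm X) ^ ((a : ℤ) - b)) x := by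
  rw [sub_eq_add_neg, zpow_add, Equiv.Perm.mul_apply, toPerm_zpow_natCast_apply,
    toPerm_zpow_neg_natCast_apply]

lemma birkhoff_iterate_symm_ge {φ : X → ℝ} {C : ℝ} (hC : ∀ y, |φ y| ≤ C)
    (n N : ℕ) (x : X) :
    birkhoff T φ n x - 2 * N * C ≤ birkhoff T φ (n + 2 * N) (T.symm^[N] x) := by
  have hsplit : birkhoff T φ (n + 2 * N) (T.symm^[N] x)
      = birkhoff T φ N (T.symm^[N] x) + birkhoff T φ n x + birkhoff T φ N (T^[n] x) := by
    rw [show n + 2 * N = N + (n + N) by ring, birkhoff_add, birkhoff_add,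
      (Function.LeftInverse.iterate T.apply_symm_apply N) x, add_assoc]
  have hhead := abs_le.1 (abs_birkhoff_le T φ hC N (T.symm^[N] x))
  have htail := abs_le.1 (abs_birkhoff_le T φ hC N (T^[n] x))
  rw [hsplit]
  linarith [hhead.1, htail.1]

end Homeomorph

section Expansive

variable {X : Type*} [MetricSpace X]

def SeparatesWithin (T : X ≃ₜ X) (η δ : ℝ) (N : ℕ) : Prop :=
  ∀ x y : X, η ≤ dist x y → ∃ j : ℤ, j.natAbs ≤ N ∧
    δ < dist (((T.toEquiv : Equiv.Perm X) ^ j) x) (((T.toEquiv : Equiv.Perm X) ^ j) y)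

lemma Expansive.exists_separatesWithin [CompactSpace X] {T : X ≃ₜ X} {δ : ℝ}
    (hexp : Expansive T δ) {η : ℝ} (hη : 0 < η) : ∃ N, SeparatesWithin T η δ N := by
  let U : ℤ → Set (X × X) := fun j =>
    {p | δ < dist (((T.toEquiv : Equiv.Perm X) ^ j) p.1) (((T.toEquiv : Equiv.Perm X) ^ j) p.2)}
  have hK : IsCompact {p : X × X | η ≤ dist p.1 p.2} :=
    (isClosed_le continuous_const continuous_dist).isCompact
  have hU : ∀ j, IsOpen (U j) := fun j => isOpen_lt continuous_const
    (continuous_dist.comp ((T.continuous_toPerm_zpow j).prodMap (T.continuous_toPerm_zpow j)))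
  have hcover : {p : X × X | η ≤ dist p.1 p.2} ⊆ ⋃ j, U j := fun p hp =>
    Set.mem_iUnion.2 <| hexp p.1 p.2 fun h => by
      have hp' : η ≤ dist p.1 p.2 := hp
      rw [h, dist_self] at hp'
      linarith
  obtain ⟨t, ht⟩ := hK.elim_finite_subcover U hU hcover
  refine ⟨t.sup Int.natAbs, fun x y hxy => ?_⟩
  obtain ⟨j, hjt, hj⟩ := Set.mem_iUnion₂.1 (ht (show (x, y) ∈ _ from hxy))
  exact ⟨j, le_sup hjt, hj⟩

lemma SeparatesWithin.isSep_image_iterate_symm [DecidableEq X] {T : X ≃ₜ X} {η δ : ℝ}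
    {N : ℕ} (hN : SeparatesWithin T η δ N) {n : ℕ} {S : Finset X} (hS : IsSep T n η S) :
    IsSep T (n + 2 * N) δ (S.image T.symm^[N]) := by
  simp only [IsSep, coe_image, Set.forall_mem_image]
  intro x hx y hy hne
  obtain ⟨l, hl, hdl⟩ := hS x hx y hy fun h => hne (h ▸ rfl)
  obtain ⟨j, hj, hdj⟩ := hN _ _ hdl.le
  refine ⟨(j + l + N).toNat, by omega, ?_⟩
  have hshift : ∀ w, T^[(j + l + N).toNat] (T.symm^[N] w)
      = ((T.toEquiv : Equiv.Perm X) ^ j) (T^[l] w) := fun w => by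
    rw [T.iterate_iterate_symm, ← T.toPerm_zpow_natCast_apply, ← Equiv.Perm.mul_apply,
      ← zpow_add]
    congr 2
    omega
  rwa [hshift, hshift]

lemma partFn_le_exp_mul_partFn_add [CompactSpace X] {T : X ≃ₜ X} {η δ : ℝ} {N : ℕ}
    (hN : SeparatesWithin T η δ N) (hδ : 0 < δ) (φ : X → ℝ) {C : ℝ}
    (hC : ∀ y, |φ y| ≤ C) (n : ℕ) :
    partFn T φ n η ≤ exp (2 * N * C) * partFn T φ (n + 2 * N) δ := by
  classical
  refine partFn_le _ _ _ (mul_nonneg (exp_nonneg _) (partFn_nonneg _ _ hδ hC _)) fun S hS => ?_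
  have hinj : Set.InjOn T.symm^[N] S := (T.symm.injective.iterate N).injOn
  calc ∑ x ∈ S, exp (birkhoff T φ n x)
      ≤ ∑ x ∈ S, exp (2 * N * C) * exp (birkhoff T φ (n + 2 * N) (T.symm^[N] x)) :=
        sum_le_sum fun x _ => by
          rw [← exp_add]
          exact exp_le_exp.2 (by linarith [T.birkhoff_iterate_symm_ge hC n N x])
    _ = exp (2 * N * C) * ∑ y ∈ S.image T.symm^[N], exp (birkhoff T φ (n + 2 * N) y) := by
        rw [sum_image hinj, mul_sum]
    _ ≤ exp (2 * N * C) * partFn T φ (n + 2 * N) δ := by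
        gcongr
        exact sum_le_partFn _ _ hδ hC _ (hN.isSep_image_iterate_symm hS)

end Expansive

section Gluing

variable {X : Type*} [MetricSpace X]

/-- `z` shadows the orbit segments of length `i` of the points `p a`, laid end to end with gaps of
length `t`. -/
def ShadowsBlocks (T : X → X) (η : ℝ) (i t : ℕ) {q : ℕ} (p : Fin q → X) (z : X) : Prop :=
  ∀ a : Fin q, ∀ l < i, dist (T^[l + a * (i + t)] z) (T^[l] (p a)) < η

lemma NonUnifSpec.exists_shadowsBlocks [Nonempty X] {T : X → X} {f : ℕ → ℕ} {η : ℝ}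
    (hspec : NonUnifSpec T f η) (i : ℕ) {q : ℕ} (p : Fin q → X) :
    ∃ z, ShadowsBlocks T η i (f i) p z := by
  classical
  obtain ⟨z, hz⟩ := hspec q (fun a => if h : a < q then p ⟨a, h⟩ else Classical.arbitrary X)
    (fun _ => i) (fun _ => f i) fun _ _ => by simp
  exact ⟨z, fun a l hl => by simpa [a.2, mul_comm] using hz a a.2 l hl⟩

lemma ShadowsBlocks.birkhoff_ge {T : X → X} {φ : X → ℝ} {g : ℕ → ℝ} {η : ℝ}
    (hg : HasVarBounds T φ g η) {C : ℝ} (hC : ∀ y, |φ y| ≤ C) {i t q : ℕ}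
    {p : Fin q → X} {z : X} (hz : ShadowsBlocks T η i t p z) :
    ∑ a, birkhoff T φ i (p a) - q * (g i + t * C) ≤ birkhoff T φ (q * (i + t)) z := by
  have hblock : ∀ a : Fin q,
      birkhoff T φ i (p a) - (g i + t * C) ≤ birkhoff T φ (i + t) (T^[a * (i + t)] z) := by
    intro a
    have hvar := abs_le.1 <| hg i i le_rfl (T^[a * (i + t)] z) (p a) fun l hl => by
      rw [← Function.iterate_add_apply]
      exact hz a l hl
    have hgap := abs_le.1 (abs_birkhoff_le T φ hC t (T^[i] (T^[a * (i + t)] z)))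
    rw [birkhoff_add]
    linarith [hvar.1, hgap.1]
  calc ∑ a, birkhoff T φ i (p a) - q * (g i + t * C)
      = ∑ a : Fin q, (birkhoff T φ i (p a) - (g i + t * C)) := by simp [sum_sub_distrib, mul_add]
    _ ≤ ∑ a : Fin q, birkhoff T φ (i + t) (T^[a * (i + t)] z) := sum_le_sum fun a _ => hblock a
    _ = birkhoff T φ (q * (i + t)) z := by
        rw [birkhoff_mul,
          Fin.sum_univ_eq_sum_range fun a => birkhoff T φ (i + t) (T^[a * (i + t)] z)]

lemma ShadowsBlocks.exists_lt_dist {T : X → X} {δ : ℝ} {i t q : ℕ} {p p' : Fin q → X}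
    {z z' : X} (hz : ShadowsBlocks T (δ / 3) i t p z) (hz' : ShadowsBlocks T (δ / 3) i t p' z')
    {a : Fin q} {l : ℕ} (hl : l < i) (hd : δ < dist (T^[l] (p a)) (T^[l] (p' a))) :
    ∃ k < q * (i + t), δ / 3 < dist (T^[k] z) (T^[k] z') := by
  refine ⟨l + a * (i + t), ?_, ?_⟩
  · calc l + a * (i + t) < (a + 1) * (i + t) := by nlinarith
      _ ≤ q * (i + t) := Nat.mul_le_mul_right _ a.2
  · have := dist_triangle4 (T^[l] (p a)) (T^[l + a * (i + t)] z) (T^[l + a * (i + t)] z')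
      (T^[l] (p' a))
    linarith [hz a l hl, hz' a l hl, dist_comm (T^[l] (p a)) (T^[l + a * (i + t)] z)]

lemma sum_exp_birkhoff_pow_le [CompactSpace X] [Nonempty X] {T : X → X} {φ : X → ℝ}
    {f : ℕ → ℕ} {g : ℕ → ℝ} {δ : ℝ} (hδ : 0 < δ) (hspec : NonUnifSpec T f (δ / 3))
    (hg : HasVarBounds T φ g (δ / 3)) {C : ℝ} (hC : ∀ y, |φ y| ≤ C) {i : ℕ}
    {S : Finset X} (hS : IsSep T i δ S) (q : ℕ) :
    (∑ x ∈ S, exp (birkhoff T φ i x)) ^ q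
      ≤ exp (q * (g i + f i * C)) * partFn T φ (q * (i + f i)) (δ / 3) := by
  classical
  choose z hz using fun p : Fin q → X => hspec.exists_shadowsBlocks i p
  set PF := Fintype.piFinset fun _ : Fin q => S
  have hsep : ∀ p ∈ PF, ∀ p' ∈ PF, p ≠ p' →
      ∃ k < q * (i + f i), δ / 3 < dist (T^[k] (z p)) (T^[k] (z p')) := by
    intro p hp p' hp' hne
    obtain ⟨a, ha⟩ := Function.ne_iff.1 hne
    obtain ⟨l, hl, hd⟩ := hS _ (Fintype.mem_piFinset.1 hp a) _ (Fintype.mem_piFinset.1 hp' a) ha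
    exact (hz p).exists_lt_dist (hz p') hl hd
  have hinj : Set.InjOn z PF := fun p hp p' hp' h => by
    by_contra hne
    obtain ⟨k, -, hk⟩ := hsep p hp p' hp' hne
    rw [h, dist_self] at hk
    linarith
  have himage : IsSep T (q * (i + f i)) (δ / 3) (PF.image z) := by
    simp only [IsSep, coe_image, Set.forall_mem_image]
    exact fun p hp p' hp' hne => hsep p hp p' hp' fun h => hne (h ▸ rfl)
  calc (∑ x ∈ S, exp (birkhoff T φ i x)) ^ q
      = ∑ p ∈ PF, exp (∑ a, birkhoff T φ i (p a)) := by
        simp only [sum_pow', exp_sum, PF]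
    _ ≤ ∑ p ∈ PF, exp (q * (g i + f i * C)) * exp (birkhoff T φ (q * (i + f i)) (z p)) :=
        sum_le_sum fun p _ => by
          rw [← exp_add]
          exact exp_le_exp.2 (by linarith [(hz p).birkhoff_ge hg hC])
    _ = exp (q * (g i + f i * C)) *
          ∑ y ∈ PF.image z, exp (birkhoff T φ (q * (i + f i)) y) := by
        rw [sum_image hinj, mul_sum]
    _ ≤ exp (q * (g i + f i * C)) * partFn T φ (q * (i + f i)) (δ / 3) := by
        gcongr
        exact sum_le_partFn _ _ (by positivity) hC _ himage

end Gluing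

section Pressure

lemma eventually_le_exp_mul_of_tendsto_log_div {a : ℕ → ℝ} {P : ℝ}
    (h : Tendsto (fun n : ℕ => log (a n) / n) atTop (𝓝 P)) {ε : ℝ} (hε : 0 < ε) :
    ∀ᶠ n : ℕ in atTop, a n ≤ exp (n * (P + ε)) := by
  filter_upwards [h.eventually (gt_mem_nhds (lt_add_of_pos_right P hε)), eventually_gt_atTop 0]
    with n hlt hn
  rw [div_lt_iff₀ (by exact_mod_cast hn)] at hlt
  exact (le_exp_log _).trans (exp_le_exp.2 (by linarith))

lemma le_exp_of_eventually_pow_le {A D R : ℝ}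
    (h : ∀ᶠ q : ℕ in atTop, A ^ q ≤ exp (q * D + R)) : A ≤ exp D := by
  by_contra! hlt
  have hratio : 1 < A / exp D := (one_lt_div (exp_pos D)).2 hlt
  obtain ⟨q, hq, hq'⟩ :=
    (h.and ((tendsto_pow_atTop_atTop_of_one_lt hratio).eventually_gt_atTop (exp R))).exists
  rw [div_pow, lt_div_iff₀ (by positivity), ← exp_nat_mul, ← exp_add, add_comm] at hq'
  exact (hq'.trans_le hq).false

variable {X : Type*} [MetricSpace X] [CompactSpace X] [Nonempty X] {T : X ≃ₜ X} {φ : X → ℝ}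
  {f : ℕ → ℕ} {g : ℕ → ℝ} {δ C P : ℝ} {N : ℕ}

lemma sum_exp_birkhoff_le_exp_pressure_add (hδ : 0 < δ) (hspec : NonUnifSpec T f (δ / 3))
    (hg : HasVarBounds T φ g (δ / 3)) (hC : ∀ y, |φ y| ≤ C)
    (hN : SeparatesWithin T (δ / 3) δ N)
    (hP : Tendsto (fun n : ℕ => log (partFn T φ n δ) / n) atTop (𝓝 P)) {i : ℕ} (hi : 0 < i)
    {S : Finset X} (hS : IsSep T i δ S) {ε : ℝ} (hε : 0 < ε) :
    ∑ x ∈ S, exp (birkhoff T φ i x) ≤ exp (g i + f i * C + (i + f i) * (P + ε)) := by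
  refine le_exp_of_eventually_pow_le (R := 2 * N * C + 2 * N * (P + ε)) ?_
  have hlen : Tendsto (fun q : ℕ => q * (i + f i) + 2 * N) atTop atTop :=
    tendsto_atTop_mono (fun q => le_add_right (Nat.le_mul_of_pos_right q (by omega))) tendsto_id
  filter_upwards [hlen.eventually (eventually_le_exp_mul_of_tendsto_log_div hP hε)] with q hq
  calc (∑ x ∈ S, exp (birkhoff T φ i x)) ^ q
      ≤ exp (q * (g i + f i * C)) * partFn T φ (q * (i + f i)) (δ / 3) :=
        sum_exp_birkhoff_pow_le hδ hspec hg hC hS q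
    _ ≤ exp (q * (g i + f i * C)) *
          (exp (2 * N * C) * partFn T φ (q * (i + f i) + 2 * N) δ) := by
        gcongr
        exact partFn_le_exp_mul_partFn_add hN hδ φ hC _
    _ ≤ exp (q * (g i + f i * C)) *
          (exp (2 * N * C) * exp (↑(q * (i + f i) + 2 * N) * (P + ε))) := by
        gcongr
    _ = exp (q * (g i + f i * C + (i + f i) * (P + ε)) + (2 * N * C + 2 * N * (P + ε))) := by
        rw [← exp_add, ← exp_add]
        push_cast
        ring_nf

lemma partFn_le_exp_pressure_add (hδ : 0 < δ) (hspec : NonUnifSpec T f (δ / 3))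
    (hg : HasVarBounds T φ g (δ / 3)) (hC : ∀ y, |φ y| ≤ C)
    (hN : SeparatesWithin T (δ / 3) δ N)
    (hP : Tendsto (fun n : ℕ => log (partFn T φ n δ) / n) atTop (𝓝 P)) {i : ℕ}
    (hi : 0 < i) :
    partFn T φ i δ ≤ exp (i * P + g i + f i * (C + |P|)) := by
  refine partFn_le _ _ _ (exp_nonneg _) fun S hS => ?_
  have hcont : Continuous fun ε : ℝ => exp (g i + f i * C + (i + f i) * (P + ε)) := by fun_prop
  have hle : ∑ x ∈ S, exp (birkhoff T φ i x) ≤ exp (g i + f i * C + (i + f i) * P) :=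
    ge_of_tendsto
      ((hcont.tendsto' 0 _ (by simp)).mono_left (nhdsWithin_le_nhds (s := Set.Ioi 0)))
      (eventually_nhdsWithin_of_forall fun ε (hε : 0 < ε) =>
        sum_exp_birkhoff_le_exp_pressure_add hδ hspec hg hC hN hP hi hS hε)
  refine hle.trans (exp_le_exp.2 ?_)
  nlinarith [mul_le_mul_of_nonneg_left (le_abs_self P) (Nat.cast_nonneg (f i) : (0 : ℝ) ≤ f i)]

end Pressure

lemma eventually_exp_mul_le_rpow {m : ℕ → ℕ} (hm : Tendsto m atTop atTop) {u : ℕ → ℝ}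
    (hu : Tendsto (fun k => u k / log (m k)) atTop (𝓝 0)) {B ε : ℝ} (hB : 0 < B)
    (hε : 0 < ε) :
    ∀ᶠ k in atTop, exp (B * u k) ≤ (m k : ℝ) ^ ε := by
  filter_upwards [hu.eventually (gt_mem_nhds (div_pos hε hB)), hm.eventually_ge_atTop 2]
    with k hk hk2
  have hm1 : (1 : ℝ) < m k := by exact_mod_cast hk2
  rw [div_lt_div_iff₀ (log_pos hm1) hB] at hk
  rw [rpow_def_of_pos (by linarith), mul_comm (log _)]
  exact exp_le_exp.2 (by linarith)

/-- Along an anchor sequence `n_k` (where `(f(n_k)+g(n_k))/ln n_k → 0`), for every `ε > 0`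
there is `K` with `Z(X,T,φ,i,δ) ≤ e^{i·P} · n_k^ε` for all `k > K` and `1 ≤ i ≤ n_k`. -/
theorem partFn_anchor_bound_spec {X : Type*} [MetricSpace X] [CompactSpace X] [Nonempty X]
    (T : X ≃ₜ X) (δ : ℝ) (hδ : 0 < δ) (hexp : Expansive T δ)
    (f : ℕ → ℕ) (hfm : Monotone f) (hspec : NonUnifSpec (⇑T) f (δ / 3))
    (φ : X → ℝ) (hφ : Continuous φ) (g : ℕ → ℝ) (hgm : Monotone g)
    (hg : HasVarBounds (⇑T) φ g (δ / 3))
    (P : ℝ)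
    (hP : Tendsto (fun n : ℕ => Real.log (partFn (⇑T) φ n δ) / n) atTop (𝓝 P))
    (nk : ℕ → ℕ) (hnk : Tendsto nk atTop atTop)
    (hanchor : Tendsto (fun k : ℕ => ((f (nk k) : ℝ) + g (nk k)) / Real.log (nk k))
      atTop (𝓝 0)) :
    ∀ ε > (0 : ℝ), ∃ K : ℕ, ∀ k > K, ∀ i : ℕ, 1 ≤ i → i ≤ nk k →
      partFn (⇑T) φ i δ ≤ Real.exp ((i : ℝ) * P) * (nk k : ℝ) ^ ε := by
  intro ε hε
  obtain ⟨x₀, -, hx₀⟩ := isCompact_univ.exists_isMaxOn Set.univ_nonempty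
    (continuous_abs.comp hφ).continuousOn
  have hC : ∀ y, |φ y| ≤ |φ x₀| := fun y => hx₀ (Set.mem_univ y)
  obtain ⟨N, hN⟩ := hexp.exists_separatesWithin (by positivity : 0 < δ / 3)
  have hg0 : ∀ n, 0 ≤ g n := fun n => (abs_nonneg _).trans <|
    hg n 0 n.zero_le (Classical.arbitrary X) (Classical.arbitrary X) fun j hj =>
      absurd hj j.not_lt_zero
  set B := |φ x₀| + |P|
  obtain ⟨K, hK⟩ := eventually_atTop.1
    (eventually_exp_mul_le_rpow hnk hanchor (by positivity : 0 < B + 1) hε)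
  refine ⟨K, fun k hk i hi hik => ?_⟩
  have hcorr : g i + f i * B ≤ (B + 1) * (f (nk k) + g (nk k)) := by
    have hf : (f i : ℝ) ≤ f (nk k) := by exact_mod_cast hfm hik
    nlinarith [hgm hik, hg0 (nk k), abs_nonneg P, abs_nonneg (φ x₀)]
  calc partFn T φ i δ ≤ exp (i * P + g i + f i * B) :=
        partFn_le_exp_pressure_add hδ hspec hg hC hN hP hi
    _ ≤ exp (i * P) * exp ((B + 1) * (f (nk k) + g (nk k))) := by
        rw [← exp_add]
        exact exp_le_exp.2 (by linarith)
    _ ≤ exp (i * P) * (nk k : ℝ) ^ ε := by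
        gcongr
        exact hK k hk.le
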